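/- If the Virasoro central charge is c = 26 and |ξ₂⟩ satisfies L_n|ξ₂⟩ = 0 for all n > 0 and L_0|ξ₂⟩ = −|ξ₂⟩, then the state |χ⟩ = (L_{−2} + (3/2)L_{−1}²)|ξ₂⟩ satisfies L_1|χ⟩ = 0, L_2|χ⟩ = 0 (hence L_n|χ⟩ = 0 for all n > 0), and (L_0−1)|χ⟩ = 0. -/
import Mathlib


/-- for c = 26, if L_n|ξ₂⟩ = 0 (n > 0) and L_0|ξ₂⟩ = −|ξ₂⟩, then
|χ⟩ = (L_{−2} + (3/2)L_{−1}²)|ξ₂⟩ satisfies L_1|χ⟩ = 0, L_2|χ⟩ = 0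
(hence L_n|χ⟩ = 0 for all n > 0) and (L_0 − 1)|χ⟩ = 0. -/
theorem level_two_null_state_is_physical
    {V : Type*} [AddCommGroup V] [Module ℝ V]
    (L : ℤ → Module.End ℝ V)
    -- Virasoro algebra with central charge c = 26
    (hVir : ∀ m n : ℤ,
      L m * L n - L n * L m =
        ((m - n : ℤ) : ℝ) • L (m + n) +
        (if m + n = 0 then (26 / 12 : ℝ) * (m : ℝ) * ((m : ℝ) ^ 2 - 1) else 0)
          • (1 : Module.End ℝ V))
    (ξ₂ χ : V)
    (hξ₂ : ∀ n : ℤ, 0 < n → L n ξ₂ = 0) (hξ₂0 : L 0 ξ₂ = -ξ₂)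
    (hχ : χ = (L (-2) + (3/2 : ℝ) • (L (-1) * L (-1))) ξ₂) :
    L 1 χ = 0 ∧ L 2 χ = 0 ∧ (∀ n : ℤ, 0 < n → L n χ = 0) ∧ L 0 χ - χ = 0 := by
  have key : ∀ m n : ℤ, ∀ v : V, L m (L n v) = L n (L m v)
      + ((m - n : ℤ) : ℝ) • L (m + n) v
      + (if m + n = 0 then (26 / 12 : ℝ) * (m : ℝ) * ((m : ℝ) ^ 2 - 1) else 0) • v := by
    intro m n v
    have h := congrArg (fun f : Module.End ℝ V => f v) (hVir m n)
    simp only [LinearMap.sub_apply, LinearMap.add_apply, LinearMap.smul_apply,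
      Module.End.mul_apply, Module.End.one_apply] at h
    rw [sub_eq_iff_eq_add] at h
    rw [h]; abel
  have hχ' : χ = L (-2) ξ₂ + (3/2 : ℝ) • L (-1) (L (-1) ξ₂) := by
    simpa [LinearMap.add_apply, LinearMap.smul_apply, Module.End.mul_apply] using hχ
  have hL1 := hξ₂ 1 one_pos
  have hL2 := hξ₂ 2 two_pos
  -- L 0 (L (-1) ξ₂) = 0
  have h0m1 : L 0 (L (-1) ξ₂) = 0 := by
    have := key 0 (-1) ξ₂
    norm_num [hξ₂0, map_neg] at this
    simpa using this
  -- L 1 (L (-1) ξ₂) = -2 ξ₂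
  have h1m1 : L 1 (L (-1) ξ₂) = (-2 : ℝ) • ξ₂ := by
    have := key 1 (-1) ξ₂
    norm_num [hL1, hξ₂0] at this
    rw [this]; module
  -- L 1 (L (-2) ξ₂) = 3 L(-1) ξ₂
  have h1m2 : L 1 (L (-2) ξ₂) = (3 : ℝ) • L (-1) ξ₂ := by
    have := key 1 (-2) ξ₂
    norm_num [hL1] at this
    simpa using this
  -- L 1 (L (-1) (L (-1) ξ₂)) = -2 L(-1) ξ₂
  have h1sq : L 1 (L (-1) (L (-1) ξ₂)) = (-2 : ℝ) • L (-1) ξ₂ := by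
    have := key 1 (-1) (L (-1) ξ₂)
    norm_num [h1m1, h0m1, map_smul] at this
    rw [this]; module
  have goal1 : L 1 χ = 0 := by
    rw [hχ', map_add, map_smul, h1m2, h1sq]; module
  -- L 2 pieces
  have h2m1 : L 2 (L (-1) ξ₂) = 0 := by
    have := key 2 (-1) ξ₂
    norm_num [hL2, hL1] at this
    simpa using this
  have h2m2 : L 2 (L (-2) ξ₂) = (9 : ℝ) • ξ₂ := by
    have := key 2 (-2) ξ₂
    norm_num [hL2, hξ₂0] at this
    rw [this]; module
  have h2sq : L 2 (L (-1) (L (-1) ξ₂)) = (-6 : ℝ) • ξ₂ := by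
    have := key 2 (-1) (L (-1) ξ₂)
    norm_num [h2m1, h1m1, map_smul] at this
    rw [this]; module
  have goal2 : L 2 χ = 0 := by
    rw [hχ', map_add, map_smul, h2m2, h2sq]; module
  -- L 0 χ = χ
  have h0m2 : L 0 (L (-2) ξ₂) = L (-2) ξ₂ := by
    have := key 0 (-2) ξ₂
    norm_num [hξ₂0, map_neg] at this
    rw [this]; module
  have h0sq : L 0 (L (-1) (L (-1) ξ₂)) = L (-1) (L (-1) ξ₂) := by
    have := key 0 (-1) (L (-1) ξ₂)
    norm_num [h0m1, map_zero] at this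
    rw [this]
  have goal0 : L 0 χ - χ = 0 := by
    rw [hχ', map_add, map_smul, h0m2, h0sq]; module
  refine ⟨goal1, goal2, ?_, goal0⟩
  intro n hn
  rcases eq_or_lt_of_le (by omega : (1 : ℤ) ≤ n) with h1 | h1
  · rw [← h1]; exact goal1
  rcases eq_or_lt_of_le (by omega : (2 : ℤ) ≤ n) with h2 | h2
  · rw [← h2]; exact goal2
  -- now n ≥ 3
  have hnm2 : L (n - 2) ξ₂ = 0 := hξ₂ _ (by omega)
  have hnm1 : L (n - 1) ξ₂ = 0 := hξ₂ _ (by omega)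
  have hnξ : L n ξ₂ = 0 := hξ₂ _ hn
  have hnm1m1 : L (n - 1) (L (-1) ξ₂) = 0 := by
    have := key (n - 1) (-1) ξ₂
    rw [this, hnm1, map_zero]
    have : n - 1 + -1 = n - 2 := by ring
    rw [this, hnm2]
    rw [if_neg (by omega)]
    simp
  have hnL1 : L n (L (-1) ξ₂) = 0 := by
    have := key n (-1) ξ₂
    rw [this, hnξ, map_zero]
    have : n + -1 = n - 1 := by ring
    rw [this, hnm1]
    rw [if_neg (by omega)]
    simp
  have hA : L n (L (-2) ξ₂) = 0 := by
    have := key n (-2) ξ₂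
    rw [this, hnξ, map_zero]
    have : n + -2 = n - 2 := by ring
    rw [this, hnm2]
    rw [if_neg (by omega)]
    simp
  have hB : L n (L (-1) (L (-1) ξ₂)) = 0 := by
    have := key n (-1) (L (-1) ξ₂)
    rw [this, hnL1, map_zero]
    have : n + -1 = n - 1 := by ring
    rw [this, hnm1m1]
    rw [if_neg (by omega)]
    simp
  rw [hχ', map_add, map_smul, hA, hB]
  simp
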